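/- Assume Σ_{i,j} p_{i,j} = 1 and that the drift is zero, i.e., Σ_{i,j} i·p_{i,j} = 0 and Σ_{i,j} j·p_{i,j} = 0. Then the quartic polynomial D(x) = b(x)² − 4a(x)c(x) has a double root at x = 1, i.e., D(1) = 0 and D′(1) = 0. -/

import Mathlib

open Polynomial

/-- The polynomial `a(x) = p_{1,1} x² + p_{0,1} x + p_{-1,1}`. -/
noncomputable def polyAR (p : ℤ → ℤ → ℝ) : Polynomial ℝ :=
  C (p 1 1) * X ^ 2 + C (p 0 1) * X + C (p (-1) 1)

/-- The polynomial `b(x) = p_{1,0} x² + (p_{0,0} - 1) x + p_{-1,0}`. -/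
noncomputable def polyBR (p : ℤ → ℤ → ℝ) : Polynomial ℝ :=
  C (p 1 0) * X ^ 2 + C (p 0 0 - 1) * X + C (p (-1) 0)

/-- The polynomial `c(x) = p_{1,-1} x² + p_{0,-1} x + p_{-1,-1}`. -/
noncomputable def polyCR (p : ℤ → ℤ → ℝ) : Polynomial ℝ :=
  C (p 1 (-1)) * X ^ 2 + C (p 0 (-1)) * X + C (p (-1) (-1))

/-- The discriminant `D(x) = b(x)² - 4 a(x) c(x)` of the kernel `K(x, ·)`. -/
noncomputable def polyDR (p : ℤ → ℤ → ℝ) : Polynomial ℝ :=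
  polyBR p ^ 2 - 4 * polyAR p * polyCR p

/-!
At `x = 1` the kernel `K(1, y) = a(1) y² + b(1) y + c(1)` has `K(1, 1) = 0` (total mass one) and
`a(1) = c(1)` (zero vertical drift), so it equals `a(1) (y - 1)²` and its discriminant vanishes.
Differentiating, `D'(1) = -4 a(1) (a + b + c)'(1)`, and `(a + b + c)(x) = K(x, 1)` has derivative
`Σ (i + 1) p_{i,j} - 1` at `1`, which is zero by the horizontal drift condition.
-/

section Discriminant

variable {R : Type*} [CommRing R] (A B C : R[X]) {x : R}

theorem eval_discr_eq_zero (hsum : (A + B + C).eval x = 0) (hAC : A.eval x = C.eval x) :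
    (B ^ 2 - 4 * A * C).eval x = 0 := by
  rw [eval_add, eval_add] at hsum
  simp only [eval_sub, eval_mul, eval_pow, eval_ofNat]
  linear_combination (B.eval x - A.eval x - C.eval x) * hsum + (A.eval x - C.eval x) * hAC

theorem eval_derivative_discr (hsum : (A + B + C).eval x = 0) (hAC : A.eval x = C.eval x) :
    (derivative (B ^ 2 - 4 * A * C)).eval x = -4 * A.eval x * (derivative (A + B + C)).eval x := by
  rw [eval_add, eval_add] at hsum
  simp only [derivative_sub, derivative_mul, derivative_pow, derivative_add, derivative_ofNat,
    eval_sub, eval_add, eval_mul, eval_pow, eval_ofNat, eval_C, zero_mul, zero_add]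
  linear_combination (2 * (derivative B).eval x) * hsum
    + (2 * (derivative B).eval x + 4 * (derivative A).eval x) * hAC

end Discriminant

theorem Finset.sum_Icc_neg_one_one {M : Type*} [AddCommMonoid M] (f : ℤ → M) :
    ∑ i ∈ Finset.Icc (-1 : ℤ) 1, f i = f (-1) + f 0 + f 1 := by
  rw [show Finset.Icc (-1 : ℤ) 1 = {-1, 0, 1} by decide]
  simp [add_assoc]

section Walk

variable (p : ℤ → ℤ → ℝ)

theorem eval_one_polyAR_add_polyBR_add_polyCR :
    (polyAR p + polyBR p + polyCR p).eval 1 =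
      ∑ i ∈ Finset.Icc (-1 : ℤ) 1, ∑ j ∈ Finset.Icc (-1 : ℤ) 1, p i j - 1 := by
  simp only [Finset.sum_Icc_neg_one_one, polyAR, polyBR, polyCR, eval_add, eval_mul, eval_pow,
    eval_C, eval_X]
  ring

theorem eval_one_derivative_polyAR_add_polyBR_add_polyCR :
    (derivative (polyAR p + polyBR p + polyCR p)).eval 1 =
      ∑ i ∈ Finset.Icc (-1 : ℤ) 1, ∑ j ∈ Finset.Icc (-1 : ℤ) 1, (i : ℝ) * p i j +
        (∑ i ∈ Finset.Icc (-1 : ℤ) 1, ∑ j ∈ Finset.Icc (-1 : ℤ) 1, p i j - 1) := by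
  simp only [Finset.sum_Icc_neg_one_one, polyAR, polyBR, polyCR, derivative_add, derivative_mul,
    derivative_pow, derivative_C, derivative_X, eval_add, eval_mul, eval_pow, eval_C, eval_X,
    eval_one, eval_zero]
  push_cast
  ring

theorem eval_one_polyAR_sub_eval_one_polyCR :
    (polyAR p).eval 1 - (polyCR p).eval 1 =
      ∑ i ∈ Finset.Icc (-1 : ℤ) 1, ∑ j ∈ Finset.Icc (-1 : ℤ) 1, (j : ℝ) * p i j := by
  simp only [Finset.sum_Icc_neg_one_one, polyAR, polyCR, eval_add, eval_mul, eval_pow,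
    eval_C, eval_X]
  push_cast
  ring

end Walk

theorem discriminant_double_root_at_one_general (p : ℤ → ℤ → ℝ)
    (hsum : ∑ i ∈ Finset.Icc (-1 : ℤ) 1, ∑ j ∈ Finset.Icc (-1 : ℤ) 1, p i j = 1)
    (hdx : ∑ i ∈ Finset.Icc (-1 : ℤ) 1, ∑ j ∈ Finset.Icc (-1 : ℤ) 1, (i : ℝ) * p i j = 0)
    (hdy : ∑ i ∈ Finset.Icc (-1 : ℤ) 1, ∑ j ∈ Finset.Icc (-1 : ℤ) 1, (j : ℝ) * p i j = 0) :
    (polyDR p).eval 1 = 0 ∧ ((polyDR p).derivative).eval 1 = 0 := by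
  have hK : (polyAR p + polyBR p + polyCR p).eval 1 = 0 := by
    rw [eval_one_polyAR_add_polyBR_add_polyCR, hsum, sub_self]
  have hAC : (polyAR p).eval 1 = (polyCR p).eval 1 :=
    sub_eq_zero.mp (by rw [eval_one_polyAR_sub_eval_one_polyCR, hdy])
  have hK' : (derivative (polyAR p + polyBR p + polyCR p)).eval 1 = 0 := by
    rw [eval_one_derivative_polyAR_add_polyBR_add_polyCR, hdx, hsum, sub_self, add_zero]
  refine ⟨eval_discr_eq_zero _ _ _ hK hAC, ?_⟩
  rw [polyDR, eval_derivative_discr _ _ _ hK hAC, hK', mul_zero]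

/-- if the jump probabilities sum to 1 and the drift is zero, then
`D(x) = b(x)² - 4a(x)c(x)` has a double root at `x = 1`: `D(1) = 0` and `D'(1) = 0`. -/
theorem discriminant_double_root_at_one (p : ℤ → ℤ → ℝ)
    (hpos : ∀ i j, 0 ≤ p i j)
    (hsum : ∑ i ∈ Finset.Icc (-1 : ℤ) 1, ∑ j ∈ Finset.Icc (-1 : ℤ) 1, p i j = 1)
    (hdx : ∑ i ∈ Finset.Icc (-1 : ℤ) 1, ∑ j ∈ Finset.Icc (-1 : ℤ) 1, (i : ℝ) * p i j = 0)
    (hdy : ∑ i ∈ Finset.Icc (-1 : ℤ) 1, ∑ j ∈ Finset.Icc (-1 : ℤ) 1, (j : ℝ) * p i j = 0) :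
    (polyDR p).eval 1 = 0 ∧ ((polyDR p).derivative).eval 1 = 0 :=
  discriminant_double_root_at_one_general p hsum hdx hdy
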